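/- Set λ = 2 and γ = 1, and let E = (√6/4, √6/4) (the scaling fixed point, i.e. (√(3/2)·γ/λ, √(3γ(2 − γ)/(2λ²)))). Let J(E) be the 2×2 Jacobian matrix of the map W at E. Then trace J(E) = 1/2 and det J(E) = 5/8; consequently the characteristic polynomial X² − (1/2)X + 5/8 has negative discriminant, the eigenvalues of J(E) form a non-real complex-conjugate pair, and each eigenvalue has modulus √(5/8) < 1 (so E is a spiral sink of the discrete dynamics). -/

import Mathlib

/-- The Jacobian matrix of the Euler-discretized quintessence map W at (x,y). -/
noncomputable def J (γ lam x y : ℝ) : Matrix (Fin 2) (Fin 2) ℝ :=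
  !![(-2 + 3*γ/2) + x^2*(9 - 9*γ/2) - (3*γ/2)*y^2, -3*γ*x*y + Real.sqrt 6 * lam * y;
     6*x*y - 3*γ*x*y - Real.sqrt (3/2) * lam * y,
       (3*γ/2 + 1) - Real.sqrt (3/2)*lam*x + (3 - 3*γ/2)*x^2 - (9*γ/2)*y^2]

lemma J_key : J 1 2 (Real.sqrt 6 / 4) (Real.sqrt 6 / 4) = !![5/8, 15/8; -3/8, -1/8] := by
  have h6 : Real.sqrt 6 * Real.sqrt 6 = 6 := Real.mul_self_sqrt (by norm_num)
  have h32 : Real.sqrt (3/2) * Real.sqrt 6 = 3 := by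
    rw [← Real.sqrt_mul (by norm_num)]
    rw [show (3/2*6 : ℝ) = 3^2 by norm_num, Real.sqrt_sq (by norm_num)]
  have heq : Real.sqrt (3/2) = Real.sqrt 3 * (Real.sqrt 2)⁻¹ := by
    rw [Real.sqrt_div (by norm_num : (0:ℝ) ≤ 3), div_eq_mul_inv]
  unfold J
  ext i j
  fin_cases i <;> fin_cases j <;> simp
  · linear_combination (3/16) * h6
  · linear_combination (5/16) * h6
  · linear_combination (3/16) * h6 - (1/2) * h32 + (Real.sqrt 6 / 2) * heq
  · linear_combination -(3/16) * h6 - (1/2) * h32 + (Real.sqrt 6 / 2) * heq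

open Polynomial in
lemma cp2 (M : Matrix (Fin 2) (Fin 2) ℂ) :
    M.charpoly = X ^ 2 - C M.trace * X + C M.det := by
  rw [Matrix.charpoly, Matrix.det_fin_two]
  simp [Matrix.charmatrix_apply_eq, Matrix.charmatrix_apply_ne, Matrix.trace_fin_two,
    Matrix.det_fin_two]
  ring

open Polynomial in
/-- For λ = 2, γ = 1 and E = (√6/4, √6/4): trace J(E) = 1/2, det J(E) = 5/8, the
discriminant of the characteristic polynomial is negative, every complex
eigenvalue of J(E) is non-real with modulus √(5/8), the eigenvalues form a
conjugate pair, and √(5/8) < 1 (so E is a spiral sink). -/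
theorem stmt_19 :
    Matrix.trace (J 1 2 (Real.sqrt 6 / 4) (Real.sqrt 6 / 4)) = 1/2 ∧
    (J 1 2 (Real.sqrt 6 / 4) (Real.sqrt 6 / 4)).det = 5/8 ∧
    ((1:ℝ)/2)^2 - 4*(5/8) < 0 ∧
    (∀ z : ℂ,
      ((J 1 2 (Real.sqrt 6 / 4) (Real.sqrt 6 / 4)).map (fun a => (a : ℂ))).charpoly.IsRoot z →
        z.im ≠ 0 ∧ ‖z‖ = Real.sqrt (5/8)) ∧
    (∃ z : ℂ, z.im ≠ 0 ∧
      ((J 1 2 (Real.sqrt 6 / 4) (Real.sqrt 6 / 4)).map (fun a => (a : ℂ))).charpoly.IsRoot z ∧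
      ((J 1 2 (Real.sqrt 6 / 4) (Real.sqrt 6 / 4)).map (fun a => (a : ℂ))).charpoly.IsRoot
        (starRingEnd ℂ z)) ∧
    Real.sqrt (5/8) < 1 := by
  have hmap : (J 1 2 (Real.sqrt 6 / 4) (Real.sqrt 6 / 4)).map (fun a => (a : ℂ)) =
      !![5/8, 15/8; -3/8, -1/8] := by
    rw [J_key]
    ext i j
    fin_cases i <;> fin_cases j <;> simp <;> norm_num
  have hroot : ∀ z : ℂ,
      ((J 1 2 (Real.sqrt 6 / 4) (Real.sqrt 6 / 4)).map (fun a => (a : ℂ))).charpoly.IsRoot z ↔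
      z ^ 2 - (1/2) * z + 5/8 = 0 := by
    intro z
    rw [hmap, cp2]
    simp [Polynomial.IsRoot, Matrix.trace_fin_two_of, Matrix.det_fin_two_of]
    constructor
    · intro h; linear_combination h
    · intro h; linear_combination h
  have hfac : ∀ z : ℂ, z ^ 2 - (1/2) * z + 5/8 = 0 →
      z = 1/4 + 3/4 * Complex.I ∨ z = 1/4 - 3/4 * Complex.I := by
    intro z h
    have : (z - (1/4 + 3/4 * Complex.I)) * (z - (1/4 - 3/4 * Complex.I)) = 0 := by
      linear_combination h - (9/16) * Complex.I_sq
    rcases mul_eq_zero.mp this with h' | h'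
    · left; exact sub_eq_zero.mp h'
    · right; exact sub_eq_zero.mp h'
  refine ⟨?_, ?_, by norm_num, ?_, ?_, ?_⟩
  · rw [J_key, Matrix.trace_fin_two_of]; norm_num
  · rw [J_key, Matrix.det_fin_two_of]; norm_num
  · intro z hz
    rcases hfac z ((hroot z).mp hz) with h | h <;> subst h <;>
      constructor <;>
      simp [Complex.norm_def, Complex.normSq_apply] <;> norm_num <;> ring_nf <;> norm_num
  · refine ⟨1/4 + 3/4 * Complex.I, by simp, ?_, ?_⟩
    · rw [hroot]; linear_combination (9/16) * Complex.I_sq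
    · have hc : starRingEnd ℂ (1/4 + 3/4 * Complex.I) = 1/4 - 3/4 * Complex.I := by
        rw [map_add, map_mul, Complex.conj_I]
        norm_num [Complex.ext_iff, map_ofNat]
      rw [hc, hroot]
      linear_combination (9/16) * Complex.I_sq
  · rw [show (1:ℝ) = Real.sqrt 1 by simp]
    exact Real.sqrt_lt_sqrt (by norm_num) (by norm_num)
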